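/- arXiv:1411.3953 — 6 statements merged into one kernel-verified Lean document; each statement's English description precedes it below -/
import Mathlib

section
/- Along solutions of the error system v̄' = g(e₃ − γ̄) − k₁ᵛ v̄ + k₂ᵛ γ̄ × (γ̄ × v̄), γ̄' = −k₁ʳ γ̄ × (γ̄ × v̄) with |γ̄| = 1, the time derivative of L0(v̄, γ̄) = (1/2)|v̄|² + (g k₂ᵛ)/(2 k₁ᵛ k₁ʳ)|e₃ − γ̄|² − (g/k₁ᵛ) v̄ᵀ(e₃ − γ̄) equals −k₁ᵛ |v̄ − (g/k₁ᵛ)(e₃ − γ̄)|² − (k₂ᵛ − g k₁ʳ/k₁ᵛ)|γ̄ × v̄|². -/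
open Matrix

noncomputable section

def cross3 (u v : Fin 3 → ℝ) : Fin 3 → ℝ :=
  ![u 1 * v 2 - u 2 * v 1, u 2 * v 0 - u 0 * v 2, u 0 * v 1 - u 1 * v 0]

def norm3 (u : Fin 3 → ℝ) : ℝ := Real.sqrt (u ⬝ᵥ u)

def e3 : Fin 3 → ℝ := ![0, 0, 1]

def L0 (g k1v k2v k1r : ℝ) (v γ : Fin 3 → ℝ) : ℝ :=
  (1 / 2) * (v ⬝ᵥ v) + (g * k2v) / (2 * k1v * k1r) * ((e3 - γ) ⬝ᵥ (e3 - γ))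
    - (g / k1v) * (v ⬝ᵥ (e3 - γ))

/-! Write `e = e₃ - γ` and `c = γ × (γ × v)`, so that `v' = g e - k₁ᵛ v + k₂ᵛ c` and
`e' = k₁ʳ c`. By the product rule, the `e ⬝ c` contributions of the last two terms of `L0`
cancel, and the triple product gives `v ⬝ c = -|γ × v|²`. What remains is a quadratic form in
`v` and `e` whose completed square is the claimed expression. -/

theorem norm3_sq (u : Fin 3 → ℝ) : norm3 u ^ 2 = u ⬝ᵥ u :=
  Real.sq_sqrt (by simpa using dotProduct_star_self_nonneg u)

theorem HasDerivAt.dotProduct {𝕜 ι : Type*} [NontriviallyNormedField 𝕜] [Fintype ι]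
    {f h : 𝕜 → ι → 𝕜} {f' h' : ι → 𝕜} {t : 𝕜}
    (hf : HasDerivAt f f' t) (hh : HasDerivAt h h' t) :
    HasDerivAt (fun s => f s ⬝ᵥ h s) (f' ⬝ᵥ h t + f t ⬝ᵥ h') t := by
  have hcoord (i : ι) : HasDerivAt (fun s => f s i * h s i) (f' i * h t i + f t i * h' i) t :=
    (hasDerivAt_pi.mp hf i).mul (hasDerivAt_pi.mp hh i)
  have hsum := HasDerivAt.fun_sum (u := Finset.univ) fun i _ => hcoord i
  rw [Finset.sum_add_distrib] at hsum
  exact hsum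

theorem dotProduct_cross_cross_self {R : Type*} [CommRing R] (u v : Fin 3 → R) :
    v ⬝ᵥ u ⨯₃ (u ⨯₃ v) = -(u ⨯₃ v ⬝ᵥ u ⨯₃ v) := by
  rw [triple_product_permutation, triple_product_permutation, ← cross_anticomm u v,
    dotProduct_neg]

theorem hasDerivAt_L0 (g k1v k2v k1r : ℝ) {v γ : ℝ → Fin 3 → ℝ} {v' γ' : Fin 3 → ℝ} {t : ℝ}
    (hv : HasDerivAt v v' t) (hγ : HasDerivAt γ γ' t) :
    HasDerivAt (fun s => L0 g k1v k2v k1r (v s) (γ s))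
      (v' ⬝ᵥ v t - g * k2v / (k1v * k1r) * (γ' ⬝ᵥ (e3 - γ t))
        - g / k1v * (v' ⬝ᵥ (e3 - γ t) - v t ⬝ᵥ γ')) t := by
  have he := (hasDerivAt_const t e3).fun_sub hγ
  rw [zero_sub] at he
  refine ((((hv.dotProduct hv).const_mul (1 / 2)).fun_add
      ((he.dotProduct he).const_mul (g * k2v / (2 * k1v * k1r)))).fun_sub
      ((hv.dotProduct he).const_mul (g / k1v))).congr_deriv ?_
  simp only [neg_dotProduct, dotProduct_neg, dotProduct_comm (e3 - γ t) γ',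
    dotProduct_comm (v t) v']
  ring

theorem L0_derivative_along_error_system {g k1v k1r : ℝ} (k2v : ℝ) (hk1v : k1v ≠ 0)
    (hk1r : k1r ≠ 0) (v γ : Fin 3 → ℝ) :
    (g • (e3 - γ) - k1v • v + k2v • γ ⨯₃ (γ ⨯₃ v)) ⬝ᵥ v
        - g * k2v / (k1v * k1r) * (-(k1r • γ ⨯₃ (γ ⨯₃ v)) ⬝ᵥ (e3 - γ))
        - g / k1v * ((g • (e3 - γ) - k1v • v + k2v • γ ⨯₃ (γ ⨯₃ v)) ⬝ᵥ (e3 - γ)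
          - v ⬝ᵥ -(k1r • γ ⨯₃ (γ ⨯₃ v))) =
      -(k1v * ((v - (g / k1v) • (e3 - γ)) ⬝ᵥ (v - (g / k1v) • (e3 - γ))))
        - (k2v - g * k1r / k1v) * (γ ⨯₃ v ⬝ᵥ γ ⨯₃ v) := by
  simp only [add_dotProduct, sub_dotProduct, smul_dotProduct, neg_dotProduct, dotProduct_add,
    dotProduct_sub, dotProduct_smul, dotProduct_neg, smul_eq_mul, dotProduct_comm _ v,
    dotProduct_cross_cross_self]
  field_simp
  ring

theorem stmt_1_general (g k1v k2v k1r : ℝ) (h1 : 0 < k1v)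
    (h3 : 0 < k1r) (v γ : ℝ → Fin 3 → ℝ)
    (hv : ∀ t, HasDerivAt v
      (g • (e3 - γ t) - k1v • v t + k2v • cross3 (γ t) (cross3 (γ t) (v t))) t)
    (hγ : ∀ t, HasDerivAt γ (-(k1r • cross3 (γ t) (cross3 (γ t) (v t)))) t) :
    ∀ t, HasDerivAt (fun s => L0 g k1v k2v k1r (v s) (γ s))
      (-(k1v * (norm3 (v t - (g / k1v) • (e3 - γ t)))^2)
        - (k2v - g * k1r / k1v) * (norm3 (cross3 (γ t) (v t)))^2) t := by
  intro t
  refine (hasDerivAt_L0 g k1v k2v k1r (hv t) (hγ t)).congr_deriv ?_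
  rw [norm3_sq, norm3_sq]
  exact L0_derivative_along_error_system k2v h1.ne' h3.ne' (v t) (γ t)

/-- time derivative of `L0` along solutions of the error system of
`γ`-Observer 1. -/
theorem stmt_1 (g k1v k2v k1r : ℝ) (hg : 0 < g) (h1 : 0 < k1v) (h2 : 0 < k2v)
    (h3 : 0 < k1r) (v γ : ℝ → Fin 3 → ℝ)
    (hγunit : ∀ t, norm3 (γ t) = 1)
    (hv : ∀ t, HasDerivAt v
      (g • (e3 - γ t) - k1v • v t + k2v • cross3 (γ t) (cross3 (γ t) (v t))) t)
    (hγ : ∀ t, HasDerivAt γ (-(k1r • cross3 (γ t) (cross3 (γ t) (v t)))) t) :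
    ∀ t, HasDerivAt (fun s => L0 g k1v k2v k1r (v s) (γ s))
      (-(k1v * (norm3 (v t - (g / k1v) • (e3 - γ t)))^2)
        - (k2v - g * k1r / k1v) * (norm3 (cross3 (γ t) (v t)))^2) t :=
  stmt_1_general g k1v k2v k1r h1 h3 v γ hv hγ
end
end

section
/- The error system v̄' = g(e₃ − γ̄) − k₁ᵛ v̄ + k₂ᵛ γ̄ × (γ̄ × v̄), γ̄' = −k₁ʳ γ̄ × (γ̄ × v̄) on ℝ³ × S² has exactly two equilibrium points: (v̄, γ̄) = (0, e₃) and (v̄, γ̄) = ((2g/k₁ᵛ) e₃, −e₃). -/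
/-!
For a unit vector `γ` the vector triple product expands to `γ × (γ × v) = (γ ⬝ v) γ - v`, so the
second equation says exactly that `v` is parallel to `γ`, and it removes the `k₂ᵛ` term from the
first one, which becomes `g (e₃ - γ) = k₁ᵛ v`. Then `g e₃` is a multiple of `γ`, which forces
`γ = ± e₃`, and `v` is read off from `g (e₃ - γ) = k₁ᵛ v`.
-/

open Matrix

noncomputable section

theorem cross3_eq_crossProduct (u v : Fin 3 → ℝ) : cross3 u v = u ⨯₃ v := rfl

theorem dotProduct_self_eq_one_of_norm3_eq_one {u : Fin 3 → ℝ} (hu : norm3 u = 1) :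
    u ⬝ᵥ u = 1 :=
  Real.sqrt_eq_one.mp hu

theorem cross3_cross3_eq_zero_iff {u v : Fin 3 → ℝ} (hu : u ⬝ᵥ u = 1) :
    cross3 u (cross3 u v) = 0 ↔ v = (u ⬝ᵥ v) • u := by
  rw [cross3_eq_crossProduct, cross3_eq_crossProduct, cross_cross_eq_smul_sub_smul', hu,
    one_smul, sub_eq_zero, dotProduct_comm, eq_comm]

theorem eq_e3_or_eq_neg_e3_of_smul_eq_smul {γ : Fin 3 → ℝ} {a b : ℝ} (ha : a ≠ 0)
    (hγ : γ ⬝ᵥ γ = 1) (h : a • e3 = b • γ) : γ = e3 ∨ γ = -e3 := by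
  have h0 := congrFun h 0
  have h1 := congrFun h 1
  have h2 := congrFun h 2
  simp only [e3, Pi.smul_apply, cons_val_zero, cons_val_one, cons_val, smul_eq_mul, mul_zero,
    zero_eq_mul, mul_one] at h0 h1 h2
  have hb : b ≠ 0 := fun hb ↦ ha (by simpa [hb] using h2)
  have hγ0 : γ 0 = 0 := h0.resolve_left hb
  have hγ1 : γ 1 = 0 := h1.resolve_left hb
  have hγ2 : γ 2 * γ 2 = 1 := by
    simpa [dotProduct, Fin.sum_univ_three, hγ0, hγ1] using hγ
  rcases mul_self_eq_one_iff.mp hγ2 with hγ2 | hγ2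
  · left
    ext i
    fin_cases i <;> simp [e3, hγ0, hγ1, hγ2]
  · right
    ext i
    fin_cases i <;> simp [e3, hγ0, hγ1, hγ2]

theorem equilibria_of_reduced_system {g k : ℝ} (hg : g ≠ 0) (hk : k ≠ 0) {v γ : Fin 3 → ℝ}
    (hγ : γ ⬝ᵥ γ = 1) :
    (g • (e3 - γ) = k • v ∧ v = (γ ⬝ᵥ v) • γ) ↔
      ((v = 0 ∧ γ = e3) ∨ (v = (2 * g / k) • e3 ∧ γ = -e3)) := by
  constructor
  · rintro ⟨hv, hpar⟩
    have hmul : g • e3 = (g + k * (γ ⬝ᵥ v)) • γ := by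
      rw [hpar] at hv
      linear_combination (norm := module) hv
    rcases eq_e3_or_eq_neg_e3_of_smul_eq_smul hg hγ hmul with rfl | rfl
    · left
      refine ⟨?_, rfl⟩
      simpa [hk] using hv.symm
    · right
      refine ⟨?_, rfl⟩
      calc v = k⁻¹ • (k • v) := by rw [smul_smul, inv_mul_cancel₀ hk, one_smul]
        _ = (2 * g / k) • e3 := by rw [← hv]; module
  · rintro (⟨rfl, rfl⟩ | ⟨rfl, rfl⟩)
    · simp
    · have he3 : e3 ⬝ᵥ e3 = 1 := by simp [e3, dotProduct, Fin.sum_univ_three]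
      constructor
      · rw [smul_smul, mul_div_cancel₀ _ hk]
        module
      · simp only [neg_dotProduct, dotProduct_smul, he3]
        module

theorem stmt_2_general (g k1v k2v k1r : ℝ) (hg : 0 < g) (h1 : 0 < k1v)
    (h3 : 0 < k1r) :
    ∀ v γ : Fin 3 → ℝ, norm3 γ = 1 →
      ((g • (e3 - γ) - k1v • v + k2v • cross3 γ (cross3 γ v) = 0 ∧
          -(k1r • cross3 γ (cross3 γ v)) = 0) ↔
        ((v = 0 ∧ γ = e3) ∨ (v = (2 * g / k1v) • e3 ∧ γ = -e3))) := by
  intro v γ hγ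
  have hγγ := dotProduct_self_eq_one_of_norm3_eq_one hγ
  rw [← equilibria_of_reduced_system hg.ne' h1.ne' hγγ, ← cross3_cross3_eq_zero_iff hγγ, neg_eq_zero,
    smul_eq_zero, or_iff_right h3.ne']
  constructor
  · rintro ⟨hv, hw⟩
    rw [hw, smul_zero, add_zero, sub_eq_zero] at hv
    exact ⟨hv, hw⟩
  · rintro ⟨hv, hw⟩
    rw [hw, hv]
    simp

/-- the error system has exactly two equilibria on `ℝ³ × S²`:
`(0, e₃)` and `((2g/k₁ᵛ) e₃, −e₃)`. -/
theorem stmt_2 (g k1v k2v k1r : ℝ) (hg : 0 < g) (h1 : 0 < k1v) (h2 : 0 < k2v)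
    (h3 : 0 < k1r) :
    ∀ v γ : Fin 3 → ℝ, norm3 γ = 1 →
      ((g • (e3 - γ) - k1v • v + k2v • cross3 γ (cross3 γ v) = 0 ∧
          -(k1r • cross3 γ (cross3 γ v)) = 0) ↔
        ((v = 0 ∧ γ = e3) ∨ (v = (2 * g / k1v) • e3 ∧ γ = -e3))) :=
  stmt_2_general g k1v k2v k1r hg h1 h3
end
end

section
/- If δ := v̄ − (g/k₁ᵛ)(e₃ − γ̄) where (v̄, γ̄) solves the error system v̄' = g(e₃ − γ̄) − k₁ᵛ v̄ + k₂ᵛ γ̄ × (γ̄ × v̄), γ̄' = −k₁ʳ γ̄ × (γ̄ × v̄) with the gain equality k₁ʳ = k₁ᵛ k₂ᵛ / g and |γ̄| = 1, then δ satisfies δ' = −k₁ᵛ δ. -/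
open Matrix

noncomputable section

theorem HasDerivAt.sub_smul_const_sub_eq_neg_smul {E : Type*} [NormedAddCommGroup E]
    [NormedSpace ℝ E] {v γ : ℝ → E} {e P : E} {g k a b t : ℝ} (hk : k ≠ 0)
    (hgain : g / k * b = a) (hv : HasDerivAt v (g • (e - γ t) - k • v t + a • P) t)
    (hγ : HasDerivAt γ (-(b • P)) t) :
    HasDerivAt (fun s => v s - (g / k) • (e - γ s)) (-(k • (v t - (g / k) • (e - γ t)))) t := by
  -- the gain relation makes the `P`-terms of `v'` and of `(g / k) • γ'` cancel
  refine (hv.sub ((hγ.const_sub e).const_smul (g / k))).congr_deriv ?_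
  rw [neg_neg, smul_smul, hgain, smul_sub k, smul_smul, mul_div_cancel₀ g hk]
  abel

theorem stmt_3_general (g k1v k2v k1r : ℝ) (hg : 0 < g) (h1 : 0 < k1v)
    (hgain : k1r = k1v * k2v / g)
    (v γ : ℝ → Fin 3 → ℝ)
    (hv : ∀ t, HasDerivAt v
      (g • (e3 - γ t) - k1v • v t + k2v • cross3 (γ t) (cross3 (γ t) (v t))) t)
    (hγ : ∀ t, HasDerivAt γ (-(k1r • cross3 (γ t) (cross3 (γ t) (v t)))) t) :
    ∀ t, HasDerivAt (fun s => v s - (g / k1v) • (e3 - γ s))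
      (-(k1v • (v t - (g / k1v) • (e3 - γ t)))) t := by
  have hcancel : g / k1v * k1r = k2v := by
    rw [hgain]
    field_simp
  exact fun t => (hv t).sub_smul_const_sub_eq_neg_smul h1.ne' hcancel (hγ t)

/-- when `k₁ʳ = k₁ᵛ k₂ᵛ / g`, the variable
`δ = v̄ − (g/k₁ᵛ)(e₃ − γ̄)` satisfies `δ' = −k₁ᵛ δ`. -/
theorem stmt_3 (g k1v k2v k1r : ℝ) (hg : 0 < g) (h1 : 0 < k1v) (h2 : 0 < k2v)
    (h3 : 0 < k1r) (hgain : k1r = k1v * k2v / g)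
    (v γ : ℝ → Fin 3 → ℝ) (hγunit : ∀ t, norm3 (γ t) = 1)
    (hv : ∀ t, HasDerivAt v
      (g • (e3 - γ t) - k1v • v t + k2v • cross3 (γ t) (cross3 (γ t) (v t))) t)
    (hγ : ∀ t, HasDerivAt γ (-(k1r • cross3 (γ t) (cross3 (γ t) (v t)))) t) :
    ∀ t, HasDerivAt (fun s => v s - (g / k1v) • (e3 - γ s))
      (-(k1v • (v t - (g / k1v) • (e3 - γ t)))) t :=
  stmt_3_general g k1v k2v k1r hg h1 hgain v γ hv hγ
end
end

section
/- Along solutions of the error system of γ-Observer 2, v̄' = g(e₃ − γ̄) − k₁ᵛ v̄ + k₂ᵛ γ̄ × (γ̄ × v̄) + k₁ʳ v̄ × (v̄ × γ̄), γ̄' = −k₁ʳ γ̄ × (γ̄ × v̄) with |γ̄| = 1, the cross product satisfies d/dt (v̄ × γ̄) = g (e₃ × γ̄) − (k₁ᵛ + k₂ᵛ)(v̄ × γ̄). -/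
open Matrix

noncomputable section

theorem HasDerivAt.crossProduct {𝕜 : Type*} [NontriviallyNormedField 𝕜] [CompleteSpace 𝕜]
    {u v : 𝕜 → Fin 3 → 𝕜} {u' v' : Fin 3 → 𝕜} {x : 𝕜}
    (hu : HasDerivAt u u' x) (hv : HasDerivAt v v' x) :
    HasDerivAt (fun s => u s ⨯₃ v s) (u' ⨯₃ v x + u x ⨯₃ v') x := by
  simpa only [LinearMap.toContinuousBilinearMap_apply, add_comm] using
    (_root_.crossProduct (R := 𝕜)).toContinuousBilinearMap.hasDerivAt_of_bilinear
      (fun _ => hu) (fun _ => hv)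

theorem cross_cross_cross_self {R : Type*} [CommRing R] (u v : Fin 3 → R) :
    (u ⨯₃ (u ⨯₃ v)) ⨯₃ u = -(u ⬝ᵥ u) • (v ⨯₃ u) := by
  simp [cross_cross_eq_smul_sub_smul', cross_self]

theorem cross_cross_cross_comm {R : Type*} [CommRing R] (u v : Fin 3 → R) :
    (u ⨯₃ (u ⨯₃ v)) ⨯₃ v = u ⨯₃ (v ⨯₃ (v ⨯₃ u)) := by
  simp [cross_cross_eq_smul_sub_smul', cross_self, dotProduct_comm]

theorem stmt_8_general (g k1v k2v k1r : ℝ) (v γ : ℝ → Fin 3 → ℝ)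
    (hγunit : ∀ t, norm3 (γ t) = 1)
    (hv : ∀ t, HasDerivAt v
      (g • (e3 - γ t) - k1v • v t + k2v • cross3 (γ t) (cross3 (γ t) (v t))
        + k1r • cross3 (v t) (cross3 (v t) (γ t))) t)
    (hγ : ∀ t, HasDerivAt γ (-(k1r • cross3 (γ t) (cross3 (γ t) (v t)))) t) :
    ∀ t, HasDerivAt (fun s => cross3 (v s) (γ s))
      (g • cross3 e3 (γ t) - (k1v + k2v) • cross3 (v t) (γ t)) t := by
  intro t
  have hunit : γ t ⬝ᵥ γ t = 1 := Real.sqrt_eq_one.mp (hγunit t)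
  simp only [cross3_eq_crossProduct] at hv hγ ⊢
  convert (hv t).crossProduct (hγ t) using 1
  simp only [map_add, map_sub, map_smul, map_neg, LinearMap.add_apply, LinearMap.sub_apply,
    LinearMap.smul_apply, cross_self, cross_cross_cross_self, hunit, cross_cross_cross_comm]
  module

/-- along the error system of `γ`-Observer 2,
`d/dt (v̄ × γ̄) = g (e₃ × γ̄) − (k₁ᵛ + k₂ᵛ)(v̄ × γ̄)`. -/
theorem stmt_8 (g k1v k2v k1r : ℝ) (hg : 0 < g) (h1 : 0 < k1v) (h2 : 0 < k2v)
    (h3 : 0 < k1r) (v γ : ℝ → Fin 3 → ℝ)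
    (hγunit : ∀ t, norm3 (γ t) = 1)
    (hv : ∀ t, HasDerivAt v
      (g • (e3 - γ t) - k1v • v t + k2v • cross3 (γ t) (cross3 (γ t) (v t))
        + k1r • cross3 (v t) (cross3 (v t) (γ t))) t)
    (hγ : ∀ t, HasDerivAt γ (-(k1r • cross3 (γ t) (cross3 (γ t) (v t)))) t) :
    ∀ t, HasDerivAt (fun s => cross3 (v s) (γ s))
      (g • cross3 e3 (γ t) - (k1v + k2v) • cross3 (v t) (γ t)) t :=
  stmt_8_general g k1v k2v k1r v γ hγunit hv hγ
end
end

section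
/- Let R̄ ∈ SO(3) satisfy R̄ e₃ = ±e₃ and let m̄ ∈ Span(e₁, e₂) be a unit vector. If (m̄ × R̄ m̄)ᵀ e₃ = 0, then, writing m̄ = R_α e₁ for the rotation R_α about e₃ by angle α, the matrix R_αᵀ R̄ R_α equals one of the four diagonal rotation matrices I, diag(−1,−1,1), diag(−1,1,−1), diag(1,−1,−1). -/
open Matrix Real

noncomputable section

def e1 : Fin 3 → ℝ := ![1, 0, 0]
/-- Rotation by angle `α` about the axis `e₃`. -/
def Ralpha (α : ℝ) : Matrix (Fin 3) (Fin 3) ℝ :=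
  !![Real.cos α, -Real.sin α, 0; Real.sin α, Real.cos α, 0; 0, 0, 1]

/-- if `R̄ ∈ SO(3)` satisfies `R̄e₃ = ±e₃`, `m̄` is a unit
vector orthogonal to `e₃` written as `m̄ = R_α e₁`, and
`(m̄ × R̄m̄)ᵀe₃ = 0`, then `R_αᵀ R̄ R_α` is one of the four diagonal
rotations `I`, `diag(−1,−1,1)`, `diag(−1,1,−1)`, `diag(1,−1,−1)`. -/
theorem stmt_14 (Rbar : Matrix (Fin 3) (Fin 3) ℝ)
    (hR : Rbar ∈ Matrix.specialOrthogonalGroup (Fin 3) ℝ)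
    (haxis : Rbar.mulVec e3 = e3 ∨ Rbar.mulVec e3 = -e3)
    (mbar : Fin 3 → ℝ) (hunit : norm3 mbar = 1) (horth : mbar ⬝ᵥ e3 = 0)
    (α : ℝ) (hα : mbar = (Ralpha α).mulVec e1)
    (hzero : cross3 mbar (Rbar.mulVec mbar) ⬝ᵥ e3 = 0) :
    (Ralpha α)ᵀ * Rbar * Ralpha α = 1 ∨
    (Ralpha α)ᵀ * Rbar * Ralpha α = Matrix.diagonal ![-1, -1, 1] ∨
    (Ralpha α)ᵀ * Rbar * Ralpha α = Matrix.diagonal ![-1, 1, -1] ∨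
    (Ralpha α)ᵀ * Rbar * Ralpha α = Matrix.diagonal ![1, -1, -1] := by


  obtain ⟨hRo, hdet⟩ := Matrix.mem_specialOrthogonalGroup_iff.mp hR
  rw [Matrix.mem_orthogonalGroup_iff'] at hRo
  have hRo' : Rbarᵀ * Rbar = 1 := hRo
  have hpyth : Real.sin α ^ 2 + Real.cos α ^ 2 = 1 := sin_sq_add_cos_sq α
  have hcol : (Rbar 0 2 = 0 ∧ Rbar 1 2 = 0) ∧ (Rbar 2 2 = 1 ∨ Rbar 2 2 = -1) := by
    rcases haxis with h | h
    · refine ⟨⟨?_, ?_⟩, Or.inl ?_⟩ <;>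
      · have := congrFun h
        have h0 := this 0; have h1 := this 1; have h2 := this 2
        simp [Matrix.mulVec, dotProduct, Fin.sum_univ_three, e3] at h0 h1 h2
        first | exact h0 | exact h1 | exact h2
    · refine ⟨⟨?_, ?_⟩, Or.inr ?_⟩ <;>
      · have := congrFun h
        have h0 := this 0; have h1 := this 1; have h2 := this 2
        simp [Matrix.mulVec, dotProduct, Fin.sum_univ_three, e3] at h0 h1 h2
        first | exact h0 | exact h1 | exact h2
  obtain ⟨⟨h02, h12⟩, hε⟩ := hcol
  have hε2 : Rbar 2 2 * Rbar 2 2 = 1 := by rcases hε with h | h <;> rw [h] <;> norm_num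
  have hεne : Rbar 2 2 ≠ 0 := by rcases hε with h | h <;> rw [h] <;> norm_num
  have he : ∀ i j, (Rbarᵀ * Rbar) i j = (1 : Matrix (Fin 3) (Fin 3) ℝ) i j := fun i j => by
    rw [hRo']
  have e00 := he 0 0; have e11 := he 1 1; have e01 := he 0 1
  have e20 := he 2 0; have e21 := he 2 1
  simp [Matrix.mul_apply, Fin.sum_univ_three, Matrix.one_apply, Matrix.transpose_apply,
    h02, h12] at e00 e11 e01 e20 e21
  have hu : Rbar 2 0 = 0 := e20.resolve_left hεne
  have hv : Rbar 2 1 = 0 := e21.resolve_left hεne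
  have h1 : Rbar 0 0 * Rbar 0 0 + Rbar 1 0 * Rbar 1 0 = 1 := by rw [hu] at e00; linarith [e00]
  have h2 : Rbar 0 1 * Rbar 0 1 + Rbar 1 1 * Rbar 1 1 = 1 := by rw [hv] at e11; linarith [e11]
  have h3 : Rbar 0 0 * Rbar 0 1 + Rbar 1 0 * Rbar 1 1 = 0 := by rw [hu, hv] at e01; linarith [e01]
  have hd : Rbar 2 2 * (Rbar 0 0 * Rbar 1 1 - Rbar 0 1 * Rbar 1 0) = 1 := by
    have t := hdet
    rw [Matrix.det_fin_three, h02, h12, hu, hv] at t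
    linear_combination t
  have had : Rbar 0 0 * Rbar 1 1 - Rbar 0 1 * Rbar 1 0 = Rbar 2 2 := by
    linear_combination Rbar 2 2 * hd - (Rbar 0 0 * Rbar 1 1 - Rbar 0 1 * Rbar 1 0) * hε2
  have hz : (Rbar 1 0) * (Real.cos α)^2 + ((Rbar 1 1) - (Rbar 0 0)) * ((Real.sin α) * (Real.cos α)) - (Rbar 0 1) * (Real.sin α)^2 = 0 := by
    have h := hzero
    rw [hα] at h
    simp [cross3, dotProduct, Fin.sum_univ_three, e3, e1, Matrix.mulVec, Ralpha, hu, hv] at h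
    linear_combination h
  have hx2 : ((Rbar 0 0) * (Real.cos α)^2 + ((Rbar 0 1) + (Rbar 1 0)) * ((Real.sin α) * (Real.cos α)) + (Rbar 1 1) * (Real.sin α)^2) * ((Rbar 0 0) * (Real.cos α)^2 + ((Rbar 0 1) + (Rbar 1 0)) * ((Real.sin α) * (Real.cos α)) + (Rbar 1 1) * (Real.sin α)^2) = 1 := by
    linear_combination (((Real.sin α)^2 + (Real.cos α)^2) * (Real.cos α)^2) * h1 + (2 * ((Real.sin α)^2 + (Real.cos α)^2) * (Real.sin α) * (Real.cos α)) * h3 +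
      (((Real.sin α)^2 + (Real.cos α)^2) * (Real.sin α)^2) * h2 + (((Real.sin α)^2 + (Real.cos α)^2) + 1) * hpyth - ((Rbar 1 0) * (Real.cos α)^2 + ((Rbar 1 1) - (Rbar 0 0)) * ((Real.sin α) * (Real.cos α)) - (Rbar 0 1) * (Real.sin α)^2) * hz
  have hxy : ((Rbar 0 0) * (Real.cos α)^2 + ((Rbar 0 1) + (Rbar 1 0)) * ((Real.sin α) * (Real.cos α)) + (Rbar 1 1) * (Real.sin α)^2) * ((Rbar 0 1) * (Real.cos α)^2 + ((Rbar 1 1) - (Rbar 0 0)) * ((Real.sin α) * (Real.cos α)) - (Rbar 1 0) * (Real.sin α)^2) = 0 := by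
    linear_combination (-(((Real.sin α)^2 + (Real.cos α)^2) * (Real.sin α) * (Real.cos α))) * h1 + (((Real.sin α)^2 + (Real.cos α)^2) * ((Real.cos α)^2 - (Real.sin α)^2)) * h3 +
      (((Real.sin α)^2 + (Real.cos α)^2) * (Real.sin α) * (Real.cos α)) * h2 - ((Rbar 0 0) * (Real.sin α)^2 - ((Rbar 0 1) + (Rbar 1 0)) * ((Real.sin α) * (Real.cos α)) + (Rbar 1 1) * (Real.cos α)^2) * hz
  have hy : ((Rbar 0 1) * (Real.cos α)^2 + ((Rbar 1 1) - (Rbar 0 0)) * ((Real.sin α) * (Real.cos α)) - (Rbar 1 0) * (Real.sin α)^2) = 0 := by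
    linear_combination ((Rbar 0 0) * (Real.cos α)^2 + ((Rbar 0 1) + (Rbar 1 0)) * ((Real.sin α) * (Real.cos α)) + (Rbar 1 1) * (Real.sin α)^2) * hxy - ((Rbar 0 1) * (Real.cos α)^2 + ((Rbar 1 1) - (Rbar 0 0)) * ((Real.sin α) * (Real.cos α)) - (Rbar 1 0) * (Real.sin α)^2) * hx2
  have hxw : ((Rbar 0 0) * (Real.cos α)^2 + ((Rbar 0 1) + (Rbar 1 0)) * ((Real.sin α) * (Real.cos α)) + (Rbar 1 1) * (Real.sin α)^2) * ((Rbar 0 0) * (Real.sin α)^2 - ((Rbar 0 1) + (Rbar 1 0)) * ((Real.sin α) * (Real.cos α)) + (Rbar 1 1) * (Real.cos α)^2) = Rbar 2 2 := by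
    linear_combination ((Rbar 0 1) * (Real.cos α)^2 + ((Rbar 1 1) - (Rbar 0 0)) * ((Real.sin α) * (Real.cos α)) - (Rbar 1 0) * (Real.sin α)^2) * hz + ((Real.sin α)^2 + (Real.cos α)^2)^2 * had + Rbar 2 2 * (((Real.sin α)^2 + (Real.cos α)^2) + 1) * hpyth
  have hw : ((Rbar 0 0) * (Real.sin α)^2 - ((Rbar 0 1) + (Rbar 1 0)) * ((Real.sin α) * (Real.cos α)) + (Rbar 1 1) * (Real.cos α)^2) = Rbar 2 2 * ((Rbar 0 0) * (Real.cos α)^2 + ((Rbar 0 1) + (Rbar 1 0)) * ((Real.sin α) * (Real.cos α)) + (Rbar 1 1) * (Real.sin α)^2) := by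
    linear_combination ((Rbar 0 0) * (Real.cos α)^2 + ((Rbar 0 1) + (Rbar 1 0)) * ((Real.sin α) * (Real.cos α)) + (Rbar 1 1) * (Real.sin α)^2) * hxw - ((Rbar 0 0) * (Real.sin α)^2 - ((Rbar 0 1) + (Rbar 1 0)) * ((Real.sin α) * (Real.cos α)) + (Rbar 1 1) * (Real.cos α)^2) * hx2
  have hT : (Ralpha α)ᵀ = !![Real.cos α, Real.sin α, 0; -Real.sin α, Real.cos α, 0; 0, 0, 1] := by
    ext i j; fin_cases i <;> fin_cases j <;> rfl
  have hkey : (Ralpha α)ᵀ * Rbar * Ralpha α = Matrix.diagonal ![(Rbar 0 0) * (Real.cos α)^2 + ((Rbar 0 1) + (Rbar 1 0)) * ((Real.sin α) * (Real.cos α)) + (Rbar 1 1) * (Real.sin α)^2, (Rbar 0 0) * (Real.sin α)^2 - ((Rbar 0 1) + (Rbar 1 0)) * ((Real.sin α) * (Real.cos α)) + (Rbar 1 1) * (Real.cos α)^2, Rbar 2 2] := by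
    rw [hT]
    ext i j
    fin_cases i <;> fin_cases j <;>
      simp [Ralpha, Matrix.mul_apply, Matrix.vecMul, dotProduct, Fin.sum_univ_three,
        Matrix.diagonal, h02, h12, hu, hv] <;>
      first
        | linear_combination hy
        | linear_combination hz
        | ring
  have hX := mul_self_eq_one_iff.mp hx2
  rcases hε with hE | hE <;> rcases hX with hXv | hXv
  · left
    rw [hkey]
    have hWv : ((Rbar 0 0) * (Real.sin α)^2 - ((Rbar 0 1) + (Rbar 1 0)) * ((Real.sin α) * (Real.cos α)) + (Rbar 1 1) * (Real.cos α)^2) = 1 := by rw [hw, hE, hXv]; ring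
    rw [hXv, hWv, hE]
    ext i j; fin_cases i <;> fin_cases j <;> simp [Matrix.diagonal, Matrix.one_apply]
  · right; left
    rw [hkey]
    have hWv : ((Rbar 0 0) * (Real.sin α)^2 - ((Rbar 0 1) + (Rbar 1 0)) * ((Real.sin α) * (Real.cos α)) + (Rbar 1 1) * (Real.cos α)^2) = -1 := by rw [hw, hE, hXv]; ring
    rw [hXv, hWv, hE]
  · right; right; right
    rw [hkey]
    have hWv : ((Rbar 0 0) * (Real.sin α)^2 - ((Rbar 0 1) + (Rbar 1 0)) * ((Real.sin α) * (Real.cos α)) + (Rbar 1 1) * (Real.cos α)^2) = -1 := by rw [hw, hE, hXv]; ring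
    rw [hXv, hWv, hE]
  · right; right; left
    rw [hkey]
    have hWv : ((Rbar 0 0) * (Real.sin α)^2 - ((Rbar 0 1) + (Rbar 1 0)) * ((Real.sin α) * (Real.cos α)) + (Rbar 1 1) * (Real.cos α)^2) = 1 := by rw [hw, hE, hXv]; ring
    rw [hXv, hWv, hE]
end
end

section
/- If R : ℝ → SO(3) and R̂ : ℝ → SO(3) satisfy R' = R ω_× and R̂' = R̂ (ω + σ)_× for ω, σ : ℝ → ℝ³, then R̄ := R R̂ᵀ satisfies R̄' = −(Rσ)_× R̄, where u_× denotes the skew-symmetric matrix with u_× w = u × w. -/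
/-!
By the product rule, `(R R̂ᵀ)' = R ω_× R̂ᵀ + R (R̂ (ω + σ)_×)ᵀ = -R σ_× R̂ᵀ`, because `u_×` is
skew-symmetric and linear in `u`. Inserting `Rᵀ R = 1` turns this into `-(R σ_× Rᵀ) R R̂ᵀ`, and
`A u_× Aᵀ = (adj Aᵀ u)_×` holds for every 3×3 matrix `A`, with `adj Aᵀ = A` on `SO(3)`.
-/

open Matrix

attribute [local instance] Matrix.frobeniusNormedAddCommGroup Matrix.frobeniusNormedSpace

noncomputable section

/-- The skew-symmetric matrix `u_×` associated with the cross product. -/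
def skew3 (u : Fin 3 → ℝ) : Matrix (Fin 3) (Fin 3) ℝ :=
  !![0, -u 2, u 1; u 2, 0, -u 0; -u 1, u 0, 0]

attribute [local instance] Matrix.frobeniusNormedRing Matrix.frobeniusNormedAlgebra

theorem skew3_mulVec (u w : Fin 3 → ℝ) : skew3 u *ᵥ w = cross3 u w := by
  ext i
  fin_cases i <;> simp [skew3, cross3, mulVec, dotProduct, Fin.sum_univ_three] <;> ring

theorem skew3_add (u v : Fin 3 → ℝ) : skew3 (u + v) = skew3 u + skew3 v := by
  ext i j
  fin_cases i <;> fin_cases j <;> simp [skew3] <;> ring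

theorem skew3_transpose (u : Fin 3 → ℝ) : (skew3 u)ᵀ = -skew3 u := by
  ext i j
  fin_cases i <;> fin_cases j <;> simp [skew3]

theorem mul_skew3_mul_transpose (A : Matrix (Fin 3) (Fin 3) ℝ) (u : Fin 3 → ℝ) :
    A * skew3 u * Aᵀ = skew3 (adjugate Aᵀ *ᵥ u) := by
  ext i j
  fin_cases i <;> fin_cases j <;>
    simp [skew3, adjugate_fin_three, mul_apply, mulVec, dotProduct, Fin.sum_univ_three] <;> ring

theorem adjugate_transpose_of_mem_specialOrthogonalGroup {n R : Type*} [Fintype n]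
    [DecidableEq n] [CommRing R] {A : Matrix n n R} (hA : A ∈ specialOrthogonalGroup n R) :
    adjugate Aᵀ = A := by
  obtain ⟨hAo, hAdet⟩ := mem_specialOrthogonalGroup_iff.mp hA
  calc adjugate Aᵀ = A * Aᵀ * adjugate Aᵀ := by rw [(mem_orthogonalGroup_iff n R).mp hAo, one_mul]
    _ = A := by rw [Matrix.mul_assoc, mul_adjugate, det_transpose, hAdet, one_smul, mul_one]

theorem mul_skew3_mul_transpose_of_mem_specialOrthogonalGroup {R : Matrix (Fin 3) (Fin 3) ℝ}
    (hR : R ∈ specialOrthogonalGroup (Fin 3) ℝ) (u : Fin 3 → ℝ) :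
    R * skew3 u * Rᵀ = skew3 (R *ᵥ u) := by
  rw [mul_skew3_mul_transpose, adjugate_transpose_of_mem_specialOrthogonalGroup hR]

theorem HasDerivAt.matrix_transpose {𝕜 m n : Type*} [NontriviallyNormedField 𝕜]
    [CompleteSpace 𝕜] [Fintype m] [Fintype n] {A : 𝕜 → Matrix m n 𝕜} {A' : Matrix m n 𝕜}
    {t : 𝕜} (hA : HasDerivAt A A' t) : HasDerivAt (fun s => (A s)ᵀ) A'ᵀ t :=
  (LinearMap.toContinuousLinearMap
    (transposeLinearEquiv m n 𝕜 𝕜).toLinearMap).hasFDerivAt.comp_hasDerivAt t hA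

theorem stmt_19_general (R Rhat : ℝ → Matrix (Fin 3) (Fin 3) ℝ)
    (ω σ : ℝ → Fin 3 → ℝ)
    (hRSO : ∀ t, R t ∈ Matrix.specialOrthogonalGroup (Fin 3) ℝ)
    (hR : ∀ t, HasDerivAt R (R t * skew3 (ω t)) t)
    (hRhat : ∀ t, HasDerivAt Rhat (Rhat t * skew3 (ω t + σ t)) t) :
    (∀ u w : Fin 3 → ℝ, (skew3 u).mulVec w = cross3 u w) ∧
    ∀ t, HasDerivAt (fun s => R s * (Rhat s)ᵀ)
      (-(skew3 ((R t).mulVec (σ t))) * (R t * (Rhat t)ᵀ)) t := by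
  refine ⟨skew3_mulVec, fun t => ?_⟩
  refine ((hR t).mul (hRhat t).matrix_transpose).congr_deriv ?_
  have hRR : (R t)ᵀ * R t = 1 := (mem_orthogonalGroup_iff' (Fin 3) ℝ).mp (hRSO t).1
  calc R t * skew3 (ω t) * (Rhat t)ᵀ + R t * (Rhat t * skew3 (ω t + σ t))ᵀ
      = -(R t * skew3 (σ t) * ((R t)ᵀ * R t) * (Rhat t)ᵀ) := by
        rw [hRR, transpose_mul, skew3_transpose, skew3_add]; noncomm_ring
    _ = -skew3 (R t *ᵥ σ t) * (R t * (Rhat t)ᵀ) := by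
        rw [← mul_skew3_mul_transpose_of_mem_specialOrthogonalGroup (hRSO t)]; noncomm_ring

/-- if `R' = R ω_×` and `R̂' = R̂ (ω + σ)_×` on `SO(3)`, then
`R̄ = R R̂ᵀ` satisfies `R̄' = −(Rσ)_× R̄`, where `u_× w = u × w`. -/
theorem stmt_19 (R Rhat : ℝ → Matrix (Fin 3) (Fin 3) ℝ)
    (ω σ : ℝ → Fin 3 → ℝ) (hωc : Continuous ω) (hσc : Continuous σ)
    (hRSO : ∀ t, R t ∈ Matrix.specialOrthogonalGroup (Fin 3) ℝ)
    (hRhatSO : ∀ t, Rhat t ∈ Matrix.specialOrthogonalGroup (Fin 3) ℝ)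
    (hR : ∀ t, HasDerivAt R (R t * skew3 (ω t)) t)
    (hRhat : ∀ t, HasDerivAt Rhat (Rhat t * skew3 (ω t + σ t)) t) :
    (∀ u w : Fin 3 → ℝ, (skew3 u).mulVec w = cross3 u w) ∧
    ∀ t, HasDerivAt (fun s => R s * (Rhat s)ᵀ)
      (-(skew3 ((R t).mulVec (σ t))) * (R t * (Rhat t)ᵀ)) t :=
  stmt_19_general R Rhat ω σ hRSO hR hRhat
end
end
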